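/- Let α ∈ Σ^k, ℓ ≥ 1, ℓ ≥ r, and u ∈ Σ^ℓ. Define L_α(u,ℓ,r) = P_α(uα,ℓ)* · u · (H_α*(L_α,ℓ−1,r) ∩ α·Σ*·ᾱ·ū) · (P_α(uα,r))‾*. Then L_α(u,ℓ,r) ⊆ H_α*(L_α,ℓ,r). -/

import Mathlib

/-!
The middle factor `h = α δ ᾱ ū` is completed on the left by `u` (`|u| = ℓ`) to `u h`. Every other
piece `p` of the word, on either side, satisfies `p α ≤ u α`, so these pieces are linearly ordered
by prefix, and the invariant is that the current word is `s α β ᾱ t̄ ∈ H_α*(L_α,ℓ,r)` with `s`, `t`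
the last pieces added on each side: it can be completed on the left by `p` when `|p| ≤ |t|` and on
the right by `q̄` when `|q| ≤ |s|`. Adding the longest remaining piece, after all pieces lying
inside it on its side, preserves the length conditions for the other side, so every piece gets
added.
-/

open Computability

/-- Reverse-complement of a word under the involution `bar`. -/
def wbar {S : Type} (bar : S → S) (w : List S) : List S := (w.map bar).reverse

/-- The set of `α`-prefixes of `w` of length at most `ℓ`. -/
def Pa {S : Type} (α w : List S) (ℓ : ℕ) : Language S :=
  {v | v ++ α <+: w ∧ v.length ≤ ℓ}

/-- `α Σ* ᾱ` : words with prefix `α` and suffix `ᾱ`. -/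
def Dom {S : Type} (bar : S → S) (α : List S) : Language S :=
  {z | ∃ β, z = α ++ β ++ wbar bar α}

/-- One-step parameterized hairpin completion with binding word `α`,
left bound `ℓ`, right bound `r`. -/
def HaP {S : Type} (bar : S → S) (α : List S) (ℓ r : ℕ) (L : Language S) : Language S :=
  {z | ∃ γ β, γ.length ≤ ℓ ∧ z = γ ++ α ++ β ++ wbar bar α ++ wbar bar γ ∧
      α ++ β ++ wbar bar α ++ wbar bar γ ∈ L} ⊔
  {z | ∃ γ β, γ.length ≤ r ∧ z = γ ++ α ++ β ++ wbar bar α ++ wbar bar γ ∧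
      γ ++ α ++ β ++ wbar bar α ∈ L}

/-- One-step parameterized hairpin completion `H_k(L,ℓ,r)`. -/
def HkP {S : Type} (bar : S → S) (k ℓ r : ℕ) (L : Language S) : Language S :=
  {z | ∃ α : List S, α.length = k ∧ z ∈ HaP bar α ℓ r L}

def HaIter {S : Type} (bar : S → S) (α : List S) (ℓ r : ℕ) (L : Language S) : ℕ → Language S
  | 0 => L
  | n + 1 => HaP bar α ℓ r (HaIter bar α ℓ r L n)

/-- Iterated parameterized hairpin completion `H_α*(L,ℓ,r)`. -/
def HaStar {S : Type} (bar : S → S) (α : List S) (ℓ r : ℕ) (L : Language S) : Language S :=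
  {z | ∃ n, z ∈ HaIter bar α ℓ r L n}

def HkIter {S : Type} (bar : S → S) (k ℓ r : ℕ) (L : Language S) : ℕ → Language S
  | 0 => L
  | n + 1 => HkP bar k ℓ r (HkIter bar k ℓ r L n)

/-- Iterated parameterized hairpin completion `H_k*(L,ℓ,r)`. -/
def HkStar {S : Type} (bar : S → S) (k ℓ r : ℕ) (L : Language S) : Language S :=
  {z | ∃ n, z ∈ HkIter bar k ℓ r L n}

/-- Unbounded two-sided hairpin completion `H_k(L)`. -/
def HU {S : Type} (bar : S → S) (k : ℕ) (L : Language S) : Language S :=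
  {z | ∃ γ α β, α.length = k ∧ z = γ ++ α ++ β ++ wbar bar α ++ wbar bar γ ∧
      (α ++ β ++ wbar bar α ++ wbar bar γ ∈ L ∨ γ ++ α ++ β ++ wbar bar α ∈ L)}

/-- Unbounded right-sided hairpin completion `RH_k(L)`. -/
def RHU {S : Type} (bar : S → S) (k : ℕ) (L : Language S) : Language S :=
  {z | ∃ γ α β, α.length = k ∧ z = γ ++ α ++ β ++ wbar bar α ++ wbar bar γ ∧
      γ ++ α ++ β ++ wbar bar α ∈ L}

def HUIter {S : Type} (bar : S → S) (k : ℕ) (L : Language S) : ℕ → Language S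
  | 0 => L
  | n + 1 => HU bar k (HUIter bar k L n)

/-- Iterated unbounded two-sided hairpin completion `H_k*(L)`. -/
def HUStar {S : Type} (bar : S → S) (k : ℕ) (L : Language S) : Language S :=
  {z | ∃ n, z ∈ HUIter bar k L n}

def RHUIter {S : Type} (bar : S → S) (k : ℕ) (L : Language S) : ℕ → Language S
  | 0 => L
  | n + 1 => RHU bar k (RHUIter bar k L n)

/-- Iterated unbounded right-sided hairpin completion `RH_k*(L)`. -/
def RHUStar {S : Type} (bar : S → S) (k : ℕ) (L : Language S) : Language S :=
  {z | ∃ n, z ∈ RHUIter bar k L n}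

/-- Image of a language under reverse-complement. -/
def barSet {S : Type} (bar : S → S) (A : Language S) : Language S := wbar bar '' A

variable {S : Type} {bar : S → S} {α : List S} {ℓ r : ℕ} {Lα : Language S}

lemma wbar_append (bar : S → S) (x y : List S) :
    wbar bar (x ++ y) = wbar bar y ++ wbar bar x := by
  simp [wbar]

@[simp]
lemma length_wbar (bar : S → S) (x : List S) : (wbar bar x).length = x.length := by
  simp [wbar]

lemma wbar_wbar (hbar : ∀ a, bar (bar a) = a) (x : List S) : wbar bar (wbar bar x) = x := by
  simp [wbar, Function.comp_def, hbar]

lemma prefix_of_wbar_suffix_wbar (hbar : ∀ a, bar (bar a) = a) {x y : List S}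
    (h : wbar bar x <:+ wbar bar y) : x <+: y := by
  obtain ⟨w, hw⟩ := h
  exact ⟨wbar bar w, by rw [← wbar_wbar hbar y, ← hw, wbar_append, wbar_wbar hbar]⟩

lemma exists_mem_forall_length_le {L : List (List S)} (h : L ≠ []) :
    ∃ m ∈ L, ∀ x ∈ L, x.length ≤ m.length := by
  classical
  obtain ⟨m, hm, hmax⟩ :=
    L.toFinset.exists_max_image List.length ((List.toFinset_nonempty_iff _).2 h)
  exact ⟨m, List.mem_toFinset.1 hm, fun x hx => hmax x (List.mem_toFinset.2 hx)⟩

lemma haIter_mono_left {ℓ₁ ℓ₂ : ℕ} (h : ℓ₁ ≤ ℓ₂) :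
    ∀ n, HaIter bar α ℓ₁ r Lα n ≤ HaIter bar α ℓ₂ r Lα n
  | 0 => le_rfl
  | n + 1 => by
    rintro z (⟨γ, β, hγ, rfl, hz⟩ | ⟨γ, β, hγ, rfl, hz⟩)
    exacts [Or.inl ⟨γ, β, hγ.trans h, rfl, haIter_mono_left h n hz⟩,
      Or.inr ⟨γ, β, hγ, rfl, haIter_mono_left h n hz⟩]

lemma haStar_mono_left {ℓ₁ ℓ₂ : ℕ} (h : ℓ₁ ≤ ℓ₂) :
    HaStar bar α ℓ₁ r Lα ≤ HaStar bar α ℓ₂ r Lα :=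
  fun _ ⟨n, hz⟩ => ⟨n, haIter_mono_left h n hz⟩

lemma left_completion_mem_haStar {γ β : List S} (hγ : γ.length ≤ ℓ)
    (h : α ++ β ++ wbar bar α ++ wbar bar γ ∈ HaStar bar α ℓ r Lα) :
    γ ++ α ++ β ++ wbar bar α ++ wbar bar γ ∈ HaStar bar α ℓ r Lα :=
  let ⟨n, hn⟩ := h
  ⟨n + 1, Or.inl ⟨γ, β, hγ, rfl, hn⟩⟩

lemma right_completion_mem_haStar {γ β : List S} (hγ : γ.length ≤ r)
    (h : γ ++ α ++ β ++ wbar bar α ∈ HaStar bar α ℓ r Lα) :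
    γ ++ α ++ β ++ wbar bar α ++ wbar bar γ ∈ HaStar bar α ℓ r Lα :=
  let ⟨n, hn⟩ := h
  ⟨n + 1, Or.inr ⟨γ, β, hγ, rfl, hn⟩⟩

lemma exists_eq_of_mem_haStar (hL : Lα ≤ Dom bar α) {z : List S}
    (hz : z ∈ HaStar bar α ℓ r Lα) :
    ∃ γ β, γ.length ≤ max ℓ r ∧ z = γ ++ α ++ β ++ wbar bar α ++ wbar bar γ := by
  obtain ⟨_ | n, hz⟩ := hz
  · obtain ⟨β, rfl⟩ := hL hz
    exact ⟨[], β, by simp, by simp [wbar]⟩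
  · rcases hz with ⟨γ, β, hγ, rfl, -⟩ | ⟨γ, β, hγ, rfl, -⟩
    exacts [⟨γ, β, le_max_of_le_left hγ, rfl⟩, ⟨γ, β, le_max_of_le_right hγ, rfl⟩]

/-- A completion ending in `ᾱ ū` has its hairpin `γ α … ᾱ γ̄` with `|γ| ≤ |u|`, so `ᾱ γ̄` is a
suffix of `ᾱ ū`; undoing the involution, `α ≤ γ α ≤ u α`. -/
lemma prefix_append_of_mem_haStar (hbar : ∀ a, bar (bar a) = a) (hL : Lα ≤ Dom bar α)
    {δ u : List S} (hu : max ℓ r ≤ u.length)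
    (h : α ++ δ ++ wbar bar α ++ wbar bar u ∈ HaStar bar α ℓ r Lα) : α <+: u ++ α := by
  obtain ⟨γ, β, hγ, heq⟩ := exists_eq_of_mem_haStar hL h
  have hαγ : α <+: γ ++ α :=
    List.prefix_of_prefix_length_le (l₃ := γ ++ α ++ β ++ wbar bar α ++ wbar bar γ)
      ⟨δ ++ wbar bar α ++ wbar bar u, by simpa using heq⟩ ⟨β ++ wbar bar α ++ wbar bar γ, by simp⟩
      (by simp)
  have hγu : wbar bar (γ ++ α) <:+ wbar bar (u ++ α) :=
    List.suffix_of_suffix_length_le (l₃ := γ ++ α ++ β ++ wbar bar α ++ wbar bar γ)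
      ⟨γ ++ α ++ β, by simp [wbar_append]⟩ ⟨α ++ δ, by simpa [wbar_append] using heq⟩
      (by simp only [length_wbar, List.length_append]; omega)
  exact hαγ.trans (prefix_of_wbar_suffix_wbar hbar hγu)

lemma exists_map_wbar_of_mem_kstar_barSet {A : Language S} {y : List S}
    (hy : y ∈ (barSet bar A)∗) :
    ∃ qs : List (List S), y = (qs.map (wbar bar)).flatten ∧ ∀ q ∈ qs, q ∈ A := by
  rw [Language.mem_kstar] at hy
  obtain ⟨ys, rfl, hys⟩ := hy
  induction ys with
  | nil => exact ⟨[], rfl, by simp⟩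
  | cons y ys ih =>
    obtain ⟨q, hq, rfl⟩ := hys y List.mem_cons_self
    obtain ⟨qs, hqs, hqsA⟩ := ih fun y hy => hys y (List.mem_cons_of_mem _ hy)
    exact ⟨q :: qs, by simp [hqs], List.forall_mem_cons.2 ⟨hq, hqsA⟩⟩

variable (bar α) in
def Reachable (u : List S) (ℓ r : ℕ) (Lα : Language S) (C s t : List S) : Prop :=
  C ∈ HaStar bar α ℓ r Lα ∧ (∃ β, C = s ++ α ++ β ++ wbar bar α ++ wbar bar t) ∧
    s ++ α <+: u ++ α ∧ t ++ α <+: u ++ α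

namespace Reachable

variable {u C s t : List S}

lemma prepend (hα : α <+: u ++ α) (h : Reachable bar α u ℓ r Lα C s t) {p : List S}
    (hp : p ∈ Pa α (u ++ α) ℓ) (hpt : p.length ≤ t.length) :
    Reachable bar α u ℓ r Lα (p ++ C) p t := by
  obtain ⟨hC, ⟨β, rfl⟩, hs, ht⟩ := h
  obtain ⟨v, hv⟩ : α <+: s ++ α := List.prefix_of_prefix_length_le hα hs (by simp)
  obtain ⟨w, hw⟩ : p ++ α <+: t ++ α :=
    List.prefix_of_prefix_length_le hp.1 ht (by simpa using hpt)
  have hC' : s ++ α ++ β ++ wbar bar α ++ wbar bar t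
      = α ++ (v ++ β ++ wbar bar w) ++ wbar bar α ++ wbar bar p := by
    rw [List.append_assoc _ (wbar bar α), ← wbar_append, ← hw, ← hv]
    simp [wbar_append]
  refine ⟨?_, ⟨v ++ β, ?_⟩, hp.1, ht⟩
  · rw [hC'] at hC ⊢
    simpa using left_completion_mem_haStar hp.2 hC
  · simp [← List.append_assoc, ← hv]

lemma append (hα : α <+: u ++ α) (h : Reachable bar α u ℓ r Lα C s t) {q : List S}
    (hq : q ∈ Pa α (u ++ α) r) (hqs : q.length ≤ s.length) :
    Reachable bar α u ℓ r Lα (C ++ wbar bar q) s q := by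
  obtain ⟨hC, ⟨β, rfl⟩, hs, ht⟩ := h
  obtain ⟨v, hv⟩ : α <+: t ++ α := List.prefix_of_prefix_length_le hα ht (by simp)
  obtain ⟨w, hw⟩ : q ++ α <+: s ++ α :=
    List.prefix_of_prefix_length_le hq.1 hs (by simpa using hqs)
  have hbarv : wbar bar α ++ wbar bar t = wbar bar v ++ wbar bar α := by
    rw [← wbar_append, ← hv, wbar_append]
  have hC' : s ++ α ++ β ++ wbar bar α ++ wbar bar t
      = q ++ α ++ (w ++ β ++ wbar bar v) ++ wbar bar α := by
    rw [List.append_assoc _ (wbar bar α), hbarv, ← hw]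
    simp
  refine ⟨?_, ⟨β ++ wbar bar v, ?_⟩, hs, hq.1⟩
  · rw [hC'] at hC ⊢
    exact right_completion_mem_haStar hq.2 hC
  · simp only [List.append_assoc, List.append_cancel_left_eq]
    rw [← List.append_assoc, hbarv, List.append_assoc]

lemma prepend_flatten (hα : α <+: u ++ α) (h : Reachable bar α u ℓ r Lα C s t)
    {L : List (List S)} (hL : ∀ p ∈ L, p ∈ Pa α (u ++ α) ℓ ∧ p.length ≤ t.length) :
    Reachable bar α u ℓ r Lα (L.flatten ++ C) (L.headD s) t := by
  induction L with
  | nil => simpa using h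
  | cons p L ih =>
    have hp := hL p List.mem_cons_self
    simpa using (ih fun x hx => hL x (List.mem_cons_of_mem p hx)).prepend hα hp.1 hp.2

lemma append_flatten (hα : α <+: u ++ α) (h : Reachable bar α u ℓ r Lα C s t)
    {R : List (List S)} (hR : ∀ q ∈ R, q ∈ Pa α (u ++ α) r ∧ q.length ≤ s.length) :
    Reachable bar α u ℓ r Lα (C ++ (R.map (wbar bar)).flatten) s (R.getLastD t) := by
  induction R generalizing C t with
  | nil => simpa using h
  | cons q R ih =>
    have hq := hR q List.mem_cons_self
    rw [List.getLastD_cons]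
    simpa using ih (h.append hα hq.1 hq.2) fun x hx => hR x (List.mem_cons_of_mem q hx)

theorem flatten_append_mem (hα : α <+: u ++ α) (L R : List (List S)) {C s t : List S}
    (h : Reachable bar α u ℓ r Lα C s t)
    (hL : ∀ p ∈ L, p ∈ Pa α (u ++ α) ℓ ∧ p.length ≤ t.length)
    (hR : ∀ q ∈ R, q ∈ Pa α (u ++ α) r ∧ q.length ≤ s.length) :
    L.flatten ++ C ++ (R.map (wbar bar)).flatten ∈ HaStar bar α ℓ r Lα := by
  induction hn : L.length + R.length using Nat.strong_induction_on generalizing L R C s t with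
  | _ n ih =>
    rcases eq_or_ne (L ++ R) [] with hLR | hLR
    · obtain ⟨rfl, rfl⟩ := List.append_eq_nil_iff.1 hLR
      simpa using h.1
    obtain ⟨m, hm, hmax⟩ := exists_mem_forall_length_le hLR
    rcases List.mem_append.1 hm with hmL | hmR
    · obtain ⟨L₀, L₁, rfl⟩ := List.append_of_mem hmL
      have h' := h.prepend_flatten hα (L := m :: L₁) fun p hp => hL p (by simp [hp])
      have hlt : L₀.length + R.length < n := by
        simp only [← hn, List.length_append, List.length_cons]; omega
      simpa using ih _ hlt L₀ R h' (fun p hp => hL p (by simp [hp]))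
        (fun q hq => ⟨(hR q hq).1, hmax q (by simp [hq])⟩) rfl
    · obtain ⟨R₀, R₁, rfl⟩ := List.append_of_mem hmR
      have hpre : R₀ ++ [m] <+: R₀ ++ m :: R₁ := ⟨R₁, by simp⟩
      have h' := h.append_flatten hα fun q hq => hR q (hpre.subset hq)
      rw [List.getLastD_concat] at h'
      have hlt : L.length + R₁.length < n := by
        simp only [← hn, List.length_append, List.length_cons]; omega
      simpa using ih _ hlt L R₁ h'
        (fun p hp => ⟨(hL p hp).1, hmax p (by simp [hp])⟩) (fun q hq => hR q (by simp [hq])) rfl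

end Reachable

theorem Lcal_subset_HaStar_general {S : Type} (bar : S → S)
    (hbar : ∀ a, bar (bar a) = a) (ℓ r : ℕ) (hr : r ≤ ℓ)
    (α u : List S) (hu : u.length = ℓ)
    (Lα : Language S) (hL : Lα ≤ Dom bar α) :
    (Pa α (u ++ α) ℓ)∗ * (({u} : Language S) *
        ((HaStar bar α (ℓ - 1) r Lα ⊓
            {z | ∃ β, z = α ++ β ++ wbar bar α ++ wbar bar u}) *
          (barSet bar (Pa α (u ++ α) r))∗))
      ≤ HaStar bar α ℓ r Lα := by
  rintro _ ⟨x, hx, _, ⟨w, hw : w = u, _, ⟨_, ⟨hh, δ, rfl⟩, y, hy, rfl⟩, rfl⟩, rfl⟩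
  subst w
  obtain ⟨ps, rfl, hps⟩ := Language.mem_kstar.1 hx
  obtain ⟨qs, rfl, hqs⟩ := exists_map_wbar_of_mem_kstar_barSet hy
  have hα : α <+: u ++ α := prefix_append_of_mem_haStar hbar hL (by omega) hh
  have hseed : Reachable bar α u ℓ r Lα (u ++ (α ++ δ ++ wbar bar α ++ wbar bar u)) u u :=
    ⟨by simpa using left_completion_mem_haStar hu.le (haStar_mono_left (Nat.sub_le ℓ 1) hh),
      ⟨δ, by simp⟩, List.prefix_rfl, List.prefix_rfl⟩
  have hz := hseed.flatten_append_mem hα ps qs (fun p hp => ⟨hps p hp, hu ▸ (hps p hp).2⟩)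
    fun q hq => ⟨hqs q hq, hu ▸ (hqs q hq).2.trans hr⟩
  simp only [List.append_assoc] at hz ⊢
  exact hz

/-- `L_α(u,ℓ,r) = P_α(uα,ℓ)* · u · (H_α*(L_α,ℓ−1,r) ∩ α·Σ*·ᾱ·ū) · (P_α(uα,r))‾*`
is contained in `H_α*(L_α,ℓ,r)`. -/
theorem Lcal_subset_HaStar {S : Type} (bar : S → S)
    (hbar : ∀ a, bar (bar a) = a) (k ℓ r : ℕ) (hℓ : 1 ≤ ℓ) (hr : r ≤ ℓ)
    (α u : List S) (hα : α.length = k) (hu : u.length = ℓ)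
    (Lα : Language S) (hL : Lα ≤ Dom bar α) :
    (Pa α (u ++ α) ℓ)∗ * (({u} : Language S) *
        ((HaStar bar α (ℓ - 1) r Lα ⊓
            {z | ∃ β, z = α ++ β ++ wbar bar α ++ wbar bar u}) *
          (barSet bar (Pa α (u ++ α) r))∗))
      ≤ HaStar bar α ℓ r Lα :=
  Lcal_subset_HaStar_general bar hbar ℓ r hr α u hu Lα hL
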